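/- arXiv:2302.04056 — 7 statements merged into one kernel-verified Lean document; each statement's English description precedes it below -/
import Mathlib

section
/- Let y = Ax + v where x ∈ ℂ^N is supported on a set Λ of size k, A has columns a_j with norms d_j, coherence μ, and suppose max_j |a_j* v|/d_j < ρ. Then for all j ∉ Λ: |a_j* y|/d_j < ρ + k·μ·d_max·x_max, where x_max = max_{i∈Λ} |x_i|. -/
open Finset

/-- Off-support correlation bound: under the noise event, for `j ∉ Λ`,
`|a_j* y|/d_j < ρ + k μ d_max x_max`. -/
theorem off_support_correlation_bound (M N : ℕ) (hN : 0 < N)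
    (a : Fin N → Fin M → ℂ) (d : Fin N → ℝ)
    (hd : ∀ j, d j = Real.sqrt (∑ m, ‖a j m‖ ^ 2))
    (hdpos : ∀ j, 0 < d j)
    (μ : ℝ)
    (hμ : ∀ j ℓ, j ≠ ℓ → ‖dotProduct (star (a j)) (a ℓ)‖ / (d j * d ℓ) ≤ μ)
    (Λ : Finset (Fin N)) (hΛ : Λ.Nonempty)
    (x : Fin N → ℂ) (hxsupp : ∀ i, i ∉ Λ → x i = 0)
    (v y : Fin M → ℂ) (ρ : ℝ)
    (hv : ∀ j, ‖dotProduct (star (a j)) v‖ / d j < ρ)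
    (hy : y = (∑ i, x i • a i) + v) :
    ∀ j ∉ Λ, ‖dotProduct (star (a j)) y‖ / d j <
      ρ + (Λ.card : ℝ) * μ *
        (Finset.univ.sup' (Finset.univ_nonempty_iff.mpr (Fin.pos_iff_nonempty.mp hN)) d) *
        (Λ.sup' hΛ fun i => ‖x i‖) := by
  intro j hj
  subst hy
  have hdj := hdpos j
  obtain ⟨i0, hi0⟩ := hΛ
  have hji0 : j ≠ i0 := fun h => hj (h ▸ hi0)
  have hμ0 : 0 ≤ μ :=
    le_trans (div_nonneg (norm_nonneg _) (mul_pos (hdpos j) (hdpos i0)).le) (hμ j i0 hji0)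
  set dmax := Finset.univ.sup' (Finset.univ_nonempty_iff.mpr (Fin.pos_iff_nonempty.mp hN)) d
    with hdmaxdef
  set xmax := Λ.sup' ⟨i0, hi0⟩ fun i => ‖x i‖ with hxmaxdef
  have hxmax0 : 0 ≤ xmax := le_trans (norm_nonneg (x i0)) (Finset.le_sup' (fun i => ‖x i‖) hi0)
  have hxmaxle : ∀ i ∈ Λ, ‖x i‖ ≤ xmax := fun i hi => Finset.le_sup' (fun i => ‖x i‖) hi
  have hdmaxle : ∀ i, d i ≤ dmax := fun i => Finset.le_sup' d (Finset.mem_univ i)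
  have hdmax0 : 0 < dmax := lt_of_lt_of_le (hdpos j) (hdmaxle j)
  -- expand the inner product
  have hexp : dotProduct (star (a j)) ((∑ i, x i • a i) + v)
      = (∑ i ∈ Λ, x i * dotProduct (star (a j)) (a i))
        + dotProduct (star (a j)) v := by
    rw [dotProduct_add]
    congr 1
    have hsum : dotProduct (star (a j)) (∑ i, x i • a i)
        = ∑ i, x i * dotProduct (star (a j)) (a i) := by
      simp only [dotProduct, Finset.sum_apply, Pi.smul_apply, smul_eq_mul,
        Finset.mul_sum]
      rw [Finset.sum_comm]
      exact Finset.sum_congr rfl fun i _ => Finset.sum_congr rfl fun m _ => by ring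
    rw [hsum, ← Finset.sum_subset (Finset.subset_univ Λ)]
    intro i _ hi
    simp [hxsupp i hi]
  rw [hexp]
  rw [div_lt_iff₀ hdj]
  calc ‖(∑ i ∈ Λ, x i * dotProduct (star (a j)) (a i))
        + dotProduct (star (a j)) v‖
      ≤ (∑ i ∈ Λ, ‖x i * dotProduct (star (a j)) (a i)‖)
        + ‖dotProduct (star (a j)) v‖ :=
        le_trans (norm_add_le _ _) (by gcongr; exact norm_sum_le _ _)
    _ ≤ (∑ _i ∈ Λ, xmax * (μ * dmax * d j)) + ‖dotProduct (star (a j)) v‖ := by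
        gcongr with i hi
        rw [norm_mul]
        have hji : j ≠ i := fun h => hj (h ▸ hi)
        have hdot : ‖dotProduct (star (a j)) (a i)‖ ≤ μ * (d j * d i) := by
          have := hμ j i hji
          rw [div_le_iff₀ (mul_pos hdj (hdpos i))] at this
          linarith
        calc ‖x i‖ * ‖dotProduct (star (a j)) (a i)‖
            ≤ xmax * (μ * (d j * d i)) := by
              apply mul_le_mul (hxmaxle i hi) hdot (norm_nonneg _) hxmax0
          _ ≤ xmax * (μ * dmax * d j) := by
              have h2 : μ * (d j * d i) ≤ μ * dmax * d j := by
                rw [show μ * dmax * d j = μ * (d j * dmax) by ring]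
                exact mul_le_mul_of_nonneg_left
                  (mul_le_mul_of_nonneg_left (hdmaxle i) hdj.le) hμ0
              exact mul_le_mul_of_nonneg_left h2 hxmax0
    _ < (∑ _i ∈ Λ, xmax * (μ * dmax * d j)) + ρ * d j := by
        gcongr
        have := hv j
        rw [div_lt_iff₀ hdj] at this
        exact this
    _ = (ρ + (Λ.card : ℝ) * μ * dmax * xmax) * d j := by
        rw [Finset.sum_const, nsmul_eq_mul]
        ring
end

section
/- Let y = Ax + v where x ∈ ℂ^N is supported on Λ with |Λ| = k ≥ 1, and suppose max_j |a_j* v|/d_j < ρ. Then max_{j∈Λ} |a_j* y|/d_j > d_min·x_max − ρ − (k−1)·μ·d_max·x_max, where x_max = max_{i∈Λ} |x_i|, d_min = min_j d_j, d_max = max_j d_j. -/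
open Finset

/-- On-support correlation lower bound: under the noise event,
`max_{j∈Λ} |a_j* y|/d_j > d_min x_max − ρ − (k−1) μ d_max x_max`. -/
theorem on_support_correlation_bound (M N : ℕ) (hN : 0 < N)
    (a : Fin N → Fin M → ℂ) (d : Fin N → ℝ)
    (hd : ∀ j, d j = Real.sqrt (∑ m, ‖a j m‖ ^ 2))
    (hdpos : ∀ j, 0 < d j)
    (μ : ℝ)
    (hμ : ∀ j ℓ, j ≠ ℓ → ‖dotProduct (star (a j)) (a ℓ)‖ / (d j * d ℓ) ≤ μ)
    (Λ : Finset (Fin N)) (hΛ : Λ.Nonempty)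
    (x : Fin N → ℂ) (hxsupp : ∀ i, i ∉ Λ → x i = 0)
    (v y : Fin M → ℂ) (ρ : ℝ)
    (hv : ∀ j, ‖dotProduct (star (a j)) v‖ / d j < ρ)
    (hy : y = (∑ i, x i • a i) + v) :
    (Λ.sup' hΛ fun j => ‖dotProduct (star (a j)) y‖ / d j) >
      (Finset.univ.inf' (Finset.univ_nonempty_iff.mpr (Fin.pos_iff_nonempty.mp hN)) d) *
        (Λ.sup' hΛ fun i => ‖x i‖)
      - ρ
      - ((Λ.card : ℝ) - 1) * μ *
        (Finset.univ.sup' (Finset.univ_nonempty_iff.mpr (Fin.pos_iff_nonempty.mp hN)) d) *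
        (Λ.sup' hΛ fun i => ‖x i‖) := by
  obtain ⟨j₀, hj₀, hXeq⟩ := Finset.exists_mem_eq_sup' hΛ (fun i => ‖x i‖)
  set X := Λ.sup' hΛ fun i => ‖x i‖ with hX
  set dmin := Finset.univ.inf' (Finset.univ_nonempty_iff.mpr (Fin.pos_iff_nonempty.mp hN)) d
  set dmax := Finset.univ.sup' (Finset.univ_nonempty_iff.mpr (Fin.pos_iff_nonempty.mp hN)) d
  have hX0 : 0 ≤ X := hXeq ▸ norm_nonneg _
  set c : Fin N → ℂ := fun i => dotProduct (star (a j₀)) (a i) with hc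
  set cv : ℂ := dotProduct (star (a j₀)) v with hcv
  have hd0 : 0 < d j₀ := hdpos j₀
  -- expansion
  have expand : dotProduct (star (a j₀)) y = x j₀ * c j₀ + ((∑ i ∈ Λ.erase j₀, x i * c i) + cv) := by
    subst hy
    rw [dotProduct_add]
    have hds : dotProduct (star (a j₀)) (∑ i, x i • a i)
        = ∑ i, dotProduct (star (a j₀)) (x i • a i) := by
      simp only [dotProduct, Finset.sum_apply, Finset.mul_sum]
      exact Finset.sum_comm
    rw [hds]
    have h1 : ∀ i, dotProduct (star (a j₀)) (x i • a i) = x i * c i := by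
      intro i; simp [dotProduct_smul, smul_eq_mul, hc]
    simp only [h1]
    rw [← Finset.sum_subset (Finset.subset_univ Λ) (by intro i _ hi; simp [hxsupp i hi])]
    rw [← Finset.add_sum_erase Λ _ hj₀, add_assoc]
  -- ‖c j₀‖ = (d j₀)^2
  have hcj : ‖c j₀‖ = (d j₀) ^ 2 := by
    have : c j₀ = ((∑ m, ‖a j₀ m‖ ^ 2 : ℝ) : ℂ) := by
      simp only [hc, dotProduct, Pi.star_apply]
      push_cast
      congr 1; funext m
      rw [mul_comm, Complex.star_def, Complex.mul_conj, Complex.normSq_eq_norm_sq]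
      norm_cast
    rw [this, Complex.norm_real, Real.norm_of_nonneg (by positivity), hd j₀,
      Real.sq_sqrt (by positivity)]
  -- bound on cross terms
  have hsum : ‖∑ i ∈ Λ.erase j₀, x i * c i‖ ≤ ((Λ.card : ℝ) - 1) * μ * dmax * X * d j₀ := by
    calc ‖∑ i ∈ Λ.erase j₀, x i * c i‖ ≤ ∑ i ∈ Λ.erase j₀, ‖x i * c i‖ := norm_sum_le _ _
    _ ≤ ∑ i ∈ Λ.erase j₀, X * (μ * (d j₀ * dmax)) := by
        apply Finset.sum_le_sum
        intro i hi
        have hine : i ≠ j₀ := Finset.ne_of_mem_erase hi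
        have hiΛ : i ∈ Λ := Finset.mem_of_mem_erase hi
        have hdi : 0 < d i := hdpos i
        have hμi := hμ j₀ i hine.symm
        have hμ0 : 0 ≤ μ := le_trans (by positivity) hμi
        have hci : ‖c i‖ ≤ μ * (d j₀ * d i) := by
          rw [div_le_iff₀ (by positivity)] at hμi
          linarith [hμi]
        have hdimax : d i ≤ dmax := Finset.le_sup' d (Finset.mem_univ i)
        have hxi : ‖x i‖ ≤ X := Finset.le_sup' (fun i => ‖x i‖) hiΛ
        rw [norm_mul]
        calc ‖x i‖ * ‖c i‖ ≤ X * (μ * (d j₀ * d i)) :=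
              mul_le_mul hxi hci (norm_nonneg _) hX0
        _ ≤ X * (μ * (d j₀ * dmax)) := by
              apply mul_le_mul_of_nonneg_left _ hX0
              apply mul_le_mul_of_nonneg_left _ hμ0
              exact mul_le_mul_of_nonneg_left hdimax hd0.le
    _ = ((Λ.erase j₀).card : ℝ) * (X * (μ * (d j₀ * dmax))) := by
        rw [Finset.sum_const, nsmul_eq_mul]
    _ = ((Λ.card : ℝ) - 1) * μ * dmax * X * d j₀ := by
        rw [Finset.card_erase_of_mem hj₀]
        have h1 : 1 ≤ Λ.card := Finset.card_pos.mpr hΛ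
        rw [Nat.cast_sub h1]
        push_cast; ring
  have hnorm : X * (d j₀) ^ 2 - ((Λ.card : ℝ) - 1) * μ * dmax * X * d j₀ - ‖cv‖
      ≤ ‖dotProduct (star (a j₀)) y‖ := by
    rw [expand]
    have h1 : ‖x j₀ * c j₀‖ - ‖(∑ i ∈ Λ.erase j₀, x i * c i) + cv‖
        ≤ ‖x j₀ * c j₀ + ((∑ i ∈ Λ.erase j₀, x i * c i) + cv)‖ := by
      have h0 := norm_sub_le (x j₀ * c j₀ + ((∑ i ∈ Λ.erase j₀, x i * c i) + cv)) ((∑ i ∈ Λ.erase j₀, x i * c i) + cv)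
      rw [add_sub_cancel_right] at h0
      linarith
    have h2 : ‖(∑ i ∈ Λ.erase j₀, x i * c i) + cv‖ ≤ ((Λ.card : ℝ) - 1) * μ * dmax * X * d j₀ + ‖cv‖ :=
      le_trans (norm_add_le _ _) (by linarith)
    have h3 : ‖x j₀ * c j₀‖ = X * (d j₀) ^ 2 := by rw [norm_mul, hcj, ← hXeq]
    linarith
  have hcvρ : ‖cv‖ < ρ * d j₀ := by
    have := hv j₀
    rw [div_lt_iff₀ hd0] at this
    exact this
  have hdminle : dmin ≤ d j₀ := Finset.inf'_le d (Finset.mem_univ j₀)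
  clear_value X dmin dmax c cv
  have key : dmin * X - ρ - ((Λ.card : ℝ) - 1) * μ * dmax * X
      < ‖dotProduct (star (a j₀)) y‖ / d j₀ := by
    rw [lt_div_iff₀ hd0]
    have hA := mul_le_mul_of_nonneg_right hdminle (mul_nonneg hX0 hd0.le)
    linarith [hnorm, hcvρ, hA]
  exact lt_of_lt_of_le key (Finset.le_sup' (fun j => ‖dotProduct (star (a j)) y‖ / d j) hj₀)
end

section
/- (First-iteration support recovery) Let y = Ax + v where x ∈ ℂ^N is supported on Λ with |Λ| = k ≥ 1, and suppose max_j |a_j* v|/d_j < ρ. If d_min·x_max − (2k−1)·μ·d_max·x_max ≥ 2ρ with x_max = max_{i∈Λ}|x_i| > 0, then max_{j∈Λ} |a_j* y|/d_j > max_{j∉Λ} |a_j* y|/d_j; i.e., the column index selected in the first OMP iteration belongs to the true support Λ. -/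
open Finset

lemma omp_dot_expand (M N : ℕ) (a : Fin N → Fin M → ℂ) (x : Fin N → ℂ) (p : Fin N)
    (v : Fin M → ℂ) :
    dotProduct (star (a p)) ((∑ i, x i • a i) + v)
      = (∑ i, x i * dotProduct (star (a p)) (a i)) + dotProduct (star (a p)) v := by
  simp only [dotProduct_add]
  congr 1
  simp only [dotProduct, Finset.sum_apply, Pi.smul_apply, smul_eq_mul, Finset.mul_sum]
  rw [Finset.sum_comm]
  exact Finset.sum_congr rfl fun i _ => by ring_nf; exact Finset.sum_congr rfl fun m _ => by ring

lemma omp_dot_self (M : ℕ) (u : Fin M → ℂ) :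
    dotProduct (star u) u = ((∑ m, ‖u m‖^2 : ℝ) : ℂ) := by
  simp [dotProduct, Pi.star_apply, Complex.conj_mul', Complex.normSq_eq_norm_sq]

/-- First-iteration support recovery of OMP: under the noise event and the
condition `d_min x_max − (2k−1) μ d_max x_max ≥ 2ρ`, the column maximizing
`|a_j* y|/d_j` lies in the support `Λ`. -/
theorem omp_first_iteration_support_recovery (M N : ℕ) (hN : 0 < N)
    (a : Fin N → Fin M → ℂ) (d : Fin N → ℝ)
    (hd : ∀ j, d j = Real.sqrt (∑ m, ‖a j m‖ ^ 2))
    (hdpos : ∀ j, 0 < d j)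
    (μ : ℝ)
    (hμ : ∀ j ℓ, j ≠ ℓ → ‖dotProduct (star (a j)) (a ℓ)‖ / (d j * d ℓ) ≤ μ)
    (Λ : Finset (Fin N)) (hΛ : Λ.Nonempty) (hΛc : (Λᶜ : Finset (Fin N)).Nonempty)
    (x : Fin N → ℂ) (hxsupp : ∀ i, i ∉ Λ → x i = 0)
    (hxmax : 0 < Λ.sup' hΛ fun i => ‖x i‖)
    (v y : Fin M → ℂ) (ρ : ℝ) (hρ : 0 ≤ ρ)
    (hv : ∀ j, ‖dotProduct (star (a j)) v‖ / d j < ρ)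
    (hy : y = (∑ i, x i • a i) + v)
    (hcond :
      (Finset.univ.inf' (Finset.univ_nonempty_iff.mpr (Fin.pos_iff_nonempty.mp hN)) d) *
          (Λ.sup' hΛ fun i => ‖x i‖)
        - (2 * (Λ.card : ℝ) - 1) * μ *
          (Finset.univ.sup' (Finset.univ_nonempty_iff.mpr (Fin.pos_iff_nonempty.mp hN)) d) *
          (Λ.sup' hΛ fun i => ‖x i‖) ≥ 2 * ρ) :
    (Λ.sup' hΛ fun j => ‖dotProduct (star (a j)) y‖ / d j) >
      (Λᶜ.sup' hΛc
        fun j => ‖dotProduct (star (a j)) y‖ / d j) := by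
  set xmax := Λ.sup' hΛ fun i => ‖x i‖ with hxm
  set dmin := Finset.univ.inf' (Finset.univ_nonempty_iff.mpr (Fin.pos_iff_nonempty.mp hN)) d
    with hdmn
  set dmax := Finset.univ.sup' (Finset.univ_nonempty_iff.mpr (Fin.pos_iff_nonempty.mp hN)) d
    with hdmx
  set k := Λ.card with hk
  obtain ⟨i0, hi0Λ, hi0⟩ := Λ.exists_mem_eq_sup' hΛ (fun i => ‖x i‖)
  obtain ⟨j0, hj0⟩ := id hΛc
  -- basic facts
  have hdmin : ∀ p, dmin ≤ d p := fun p => Finset.inf'_le d (Finset.mem_univ p)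
  have hdmax : ∀ p, d p ≤ dmax := fun p => Finset.le_sup' d (Finset.mem_univ p)
  have hxle : ∀ i ∈ Λ, ‖x i‖ ≤ xmax := fun i hi => Finset.le_sup' (fun i => ‖x i‖) hi
  have hxnn : (0:ℝ) ≤ xmax := le_of_lt hxmax
  have hμ0 : 0 ≤ μ := by
    have hne : j0 ≠ i0 := by
      rintro rfl; exact (Finset.mem_compl.mp hj0) hi0Λ
    exact le_trans (div_nonneg (norm_nonneg _)
      (mul_pos (hdpos j0) (hdpos i0)).le) (hμ j0 i0 hne)
  -- cross-correlation bound
  have hcross : ∀ p i, p ≠ i →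
      ‖dotProduct (star (a p)) (a i)‖ ≤ μ * (d p * d i) := by
    intro p i hpi
    have := hμ p i hpi
    rwa [div_le_iff₀ (mul_pos (hdpos p) (hdpos i))] at this
  -- expansion of the dot product of a column with y
  have hdot : ∀ p, dotProduct (star (a p)) y
      = (∑ i ∈ Λ, x i * dotProduct (star (a p)) (a i))
        + dotProduct (star (a p)) v := by
    intro p
    rw [hy, omp_dot_expand]
    congr 1
    symm
    apply Finset.sum_subset (Finset.subset_univ Λ)
    intro i _ hi
    simp [hxsupp i hi]
  -- k ≥ 1
  have hk1 : 1 ≤ k := Finset.card_pos.mpr ⟨i0, hi0Λ⟩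
  have hk1R : (1:ℝ) ≤ (k:ℝ) := by exact_mod_cast hk1
  -- the common per-term bound over Λ
  have hterm : ∀ p, ∀ i ∈ Λ, p ≠ i →
      ‖x i * dotProduct (star (a p)) (a i)‖ ≤ (xmax * (μ * dmax)) * d p := by
    intro p i hiΛ hpi
    rw [norm_mul]
    calc ‖x i‖ * ‖dotProduct (star (a p)) (a i)‖
        ≤ xmax * (μ * (d p * d i)) := by
          apply mul_le_mul (hxle i hiΛ) (hcross p i hpi) (norm_nonneg _) hxnn
      _ ≤ xmax * (μ * (d p * dmax)) := by
          have h1 := hdmax i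
          have hdp := (hdpos p).le
          gcongr
      _ = (xmax * (μ * dmax)) * d p := by ring
  -- Upper bound for j ∉ Λ
  have hupper : ∀ j ∈ Λᶜ,
      ‖dotProduct (star (a j)) y‖ / d j < (k:ℝ) * (xmax * (μ * dmax)) + ρ := by
    intro j hj
    have hjΛ : j ∉ Λ := Finset.mem_compl.mp hj
    have hnum : ‖dotProduct (star (a j)) y‖
        ≤ ((k:ℝ) * (xmax * (μ * dmax))) * d j
          + ‖dotProduct (star (a j)) v‖ := by
      rw [hdot j]
      calc ‖(∑ i ∈ Λ, x i * dotProduct (star (a j)) (a i))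
              + dotProduct (star (a j)) v‖
          ≤ ‖∑ i ∈ Λ, x i * dotProduct (star (a j)) (a i)‖
            + ‖dotProduct (star (a j)) v‖ := norm_add_le _ _
        _ ≤ (∑ i ∈ Λ, ‖x i * dotProduct (star (a j)) (a i)‖)
            + ‖dotProduct (star (a j)) v‖ := by
            gcongr; exact norm_sum_le _ _
        _ ≤ (∑ _i ∈ Λ, (xmax * (μ * dmax)) * d j)
            + ‖dotProduct (star (a j)) v‖ := by
            gcongr with i hiΛ
            exact hterm j i hiΛ (fun h => hjΛ (h ▸ hiΛ))
        _ = ((k:ℝ) * (xmax * (μ * dmax))) * d j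
            + ‖dotProduct (star (a j)) v‖ := by
            rw [Finset.sum_const, hk]; push_cast; ring
    calc ‖dotProduct (star (a j)) y‖ / d j
        ≤ (((k:ℝ) * (xmax * (μ * dmax))) * d j
            + ‖dotProduct (star (a j)) v‖) / d j := by
          gcongr
          exact (hdpos j).le
      _ = (k:ℝ) * (xmax * (μ * dmax))
            + ‖dotProduct (star (a j)) v‖ / d j := by
          rw [add_div, mul_div_cancel_right₀ _ (hdpos j).ne']
      _ < (k:ℝ) * (xmax * (μ * dmax)) + ρ := by
          have := hv j; linarith
  -- Lower bound at i0
  have hlower : xmax * dmin - ((k:ℝ) - 1) * (xmax * (μ * dmax)) - ρ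
      < ‖dotProduct (star (a i0)) y‖ / d i0 := by
    set A := x i0 * dotProduct (star (a i0)) (a i0) with hA
    set B := (∑ i ∈ Λ.erase i0, x i * dotProduct (star (a i0)) (a i))
        + dotProduct (star (a i0)) v with hB
    have hAB : dotProduct (star (a i0)) y = A + B := by
      rw [hdot i0, hA, hB, ← Finset.add_sum_erase _ _ hi0Λ]; ring
    have hnormA : ‖A‖ = xmax * (d i0 * d i0) := by
      rw [hA, norm_mul, omp_dot_self]
      have hsnn : (0:ℝ) ≤ ∑ m, ‖a i0 m‖ ^ 2 :=
        Finset.sum_nonneg fun m _ => sq_nonneg _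
      have hxi0 : ‖x i0‖ = xmax := hi0.symm
      rw [Complex.norm_real, Real.norm_eq_abs, abs_of_nonneg hsnn, hxi0]
      congr 1
      rw [hd i0]
      exact (Real.mul_self_sqrt hsnn).symm
    have hnormB : ‖B‖ ≤ (((k:ℝ) - 1) * (xmax * (μ * dmax))) * d i0
        + ‖dotProduct (star (a i0)) v‖ := by
      rw [hB]
      calc ‖(∑ i ∈ Λ.erase i0, x i * dotProduct (star (a i0)) (a i))
              + dotProduct (star (a i0)) v‖
          ≤ (∑ i ∈ Λ.erase i0, ‖x i * dotProduct (star (a i0)) (a i)‖)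
            + ‖dotProduct (star (a i0)) v‖ := by
            refine le_trans (norm_add_le _ _) ?_
            gcongr; exact norm_sum_le _ _
        _ ≤ (∑ _i ∈ Λ.erase i0, (xmax * (μ * dmax)) * d i0)
            + ‖dotProduct (star (a i0)) v‖ := by
            gcongr with i hiE
            exact hterm i0 i (Finset.mem_of_mem_erase hiE)
              fun h => (Finset.ne_of_mem_erase hiE) h.symm
        _ = (((k:ℝ) - 1) * (xmax * (μ * dmax))) * d i0
            + ‖dotProduct (star (a i0)) v‖ := by
            rw [Finset.sum_const, Finset.card_erase_of_mem hi0Λ, nsmul_eq_mul]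
            rw [Nat.cast_sub hk1]
            push_cast; ring
    -- ‖A + B‖ ≥ ‖A‖ - ‖B‖
    have htri : ‖A‖ - ‖B‖ ≤ ‖A + B‖ := by
      have h1 : ‖A‖ ≤ ‖A + B‖ + ‖B‖ := by
        calc ‖A‖ = ‖(A + B) - B‖ := by ring_nf
          _ ≤ ‖A + B‖ + ‖B‖ := norm_sub_le _ _
      linarith
    have hdiv : (‖A‖ - ‖B‖) / d i0 ≤ ‖dotProduct (star (a i0)) y‖ / d i0 := by
      rw [hAB]
      exact div_le_div_of_nonneg_right htri (hdpos i0).le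
    have hval : xmax * d i0 - ((k:ℝ) - 1) * (xmax * (μ * dmax))
        - ‖dotProduct (star (a i0)) v‖ / d i0 ≤ (‖A‖ - ‖B‖) / d i0 := by
      rw [hnormA]
      have : (xmax * (d i0 * d i0)
          - ((((k:ℝ) - 1) * (xmax * (μ * dmax))) * d i0
            + ‖dotProduct (star (a i0)) v‖)) / d i0
          = xmax * d i0 - ((k:ℝ) - 1) * (xmax * (μ * dmax))
            - ‖dotProduct (star (a i0)) v‖ / d i0 := by
        field_simp [(hdpos i0).ne']
        ring
      rw [← this]
      gcongr
      exact (hdpos i0).le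
    have hnv := hv i0
    have hxd : xmax * dmin ≤ xmax * d i0 := by
      have := hdmin i0; nlinarith
    linarith
  -- combine
  have hmid : (k:ℝ) * (xmax * (μ * dmax)) + ρ
      ≤ xmax * dmin - ((k:ℝ) - 1) * (xmax * (μ * dmax)) - ρ := by
    have h2 : dmin * xmax - (2 * (k:ℝ) - 1) * μ * dmax * xmax ≥ 2 * ρ := hcond
    nlinarith
  have hfinal : ∀ j ∈ Λᶜ, ‖dotProduct (star (a j)) y‖ / d j
      < ‖dotProduct (star (a i0)) y‖ / d i0 := by
    intro j hj
    calc ‖dotProduct (star (a j)) y‖ / d j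
        < (k:ℝ) * (xmax * (μ * dmax)) + ρ := hupper j hj
      _ ≤ xmax * dmin - ((k:ℝ) - 1) * (xmax * (μ * dmax)) - ρ := hmid
      _ < ‖dotProduct (star (a i0)) y‖ / d i0 := hlower
  calc Λᶜ.sup' hΛc (fun j => ‖dotProduct (star (a j)) y‖ / d j)
      < ‖dotProduct (star (a i0)) y‖ / d i0 :=
        (Finset.sup'_lt_iff hΛc).mpr hfinal
    _ ≤ Λ.sup' hΛ (fun j => ‖dotProduct (star (a j)) y‖ / d j) :=
        Finset.le_sup' (fun j => ‖dotProduct (star (a j)) y‖ / d j) hi0Λ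
end

section
/- (Theorem 1) Suppose the noise event max_{j∈[N]} |a_j* v|/d_j < ρ holds and d_min·x_min − (2k−1)·μ·d_max·x_min ≥ 2ρ, where x_min = min_{i∈Λ}|x_i| > 0. Then the OMP algorithm (greedy column selection by maximal |a_j* r|/d_j, followed by least squares on the selected columns) applied to y = Ax + v for k iterations selects exactly the support Λ of x. -/
open Matrix Finset

/-- The submatrix of `A` formed by the columns indexed by `S`. -/
noncomputable def subCols {M N : ℕ} (A : Matrix (Fin M) (Fin N) ℂ)
    (S : Finset (Fin N)) : Matrix (Fin M) S ℂ :=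
  Matrix.of fun m j => A m j

/-- The residual of the least-squares fit of `y` on the columns of `A`
indexed by `S` (steps 3–4 of the OMP algorithm). -/
noncomputable def lsResidual {M N : ℕ} (A : Matrix (Fin M) (Fin N) ℂ)
    (y : Fin M → ℂ) (S : Finset (Fin N)) : Fin M → ℂ :=
  y - (subCols A S).mulVec
    (((subCols A S)ᴴ * subCols A S)⁻¹.mulVec ((subCols A S)ᴴ.mulVec y))

set_option maxHeartbeats 2000000 in
lemma omp_step {M N : ℕ}
    (A : Matrix (Fin M) (Fin N) ℂ) (d : Fin N → ℝ)
    (hd : ∀ j, d j = Real.sqrt (∑ m, ‖A m j‖ ^ 2))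
    (hdpos : ∀ j, 0 < d j)
    (μ : ℝ) (hμ0 : 0 ≤ μ)
    (hμ : ∀ j ℓ, j ≠ ℓ →
      ‖dotProduct (star fun m => A m j) (fun m => A m ℓ)‖ / (d j * d ℓ) ≤ μ)
    (Λ : Finset (Fin N)) (k : ℕ) (hk : 1 ≤ k) (hcard : Λ.card = k)
    (x : Fin N → ℂ) (hxsupp : ∀ i, x i ≠ 0 ↔ i ∈ Λ)
    (x_min : ℝ) (hxmin : ∀ i ∈ Λ, x_min ≤ ‖x i‖) (hxminpos : 0 < x_min)
    (v : Fin M → ℂ) (ρ : ℝ) (hρ : 0 < ρ)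
    (hv : ∀ j, ‖dotProduct (star fun m => A m j) v‖ / d j < ρ)
    (y : Fin M → ℂ) (hy : y = A.mulVec x + v)
    (dmin dmax : ℝ) (hdmin : ∀ j, dmin ≤ d j) (hdmax : ∀ j, d j ≤ dmax)
    (hcond : dmin * x_min - (2 * (k : ℝ) - 1) * μ * dmax * x_min ≥ 2 * ρ)
    (S : Finset (Fin N)) (hS : S ⊆ Λ) (hSne : S ≠ Λ)
    (s : Fin N)
    (hs : ∀ j, ‖dotProduct (star fun m => A m j) (lsResidual A y S)‖ / d j ≤
      ‖dotProduct (star fun m => A m s) (lsResidual A y S)‖ / d s) :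
    s ∈ Λ ∧ s ∉ S := by
  classical
  -- basic positivity facts
  have hΛne : Λ.Nonempty := Finset.card_pos.mp (by rw [hcard]; omega)
  obtain ⟨j1, hj1⟩ := id hΛne
  have hdmax0 : 0 < dmax := lt_of_lt_of_le (hdpos j1) (hdmax j1)
  have hc : 0 < dmin - (2 * (k : ℝ) - 1) * μ * dmax := by nlinarith
  have hkey : ((k : ℝ) - 1) * μ * dmax < dmin := by
    nlinarith [mul_nonneg (mul_nonneg (Nat.cast_nonneg (α := ℝ) k) hμ0) hdmax0.le]
  -- gram entries
  set g : Fin N → Fin N → ℂ :=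
    fun j ℓ => dotProduct (star fun m => A m j) (fun m => A m ℓ) with hg
  have hdsq : ∀ j, d j ^ 2 = ∑ m, ‖A m j‖ ^ 2 := by
    intro j
    rw [hd j]
    exact Real.sq_sqrt (Finset.sum_nonneg fun m _ => by positivity)
  have hdiag : ∀ j, g j j = ((d j ^ 2 : ℝ) : ℂ) := by
    intro j
    rw [hdsq j]
    simp only [hg, dotProduct, Pi.star_apply]
    push_cast
    refine Finset.sum_congr rfl fun m _ => ?_
    simpa using RCLike.conj_mul (A m j)
  have hdiagnorm : ∀ j, ‖g j j‖ = d j ^ 2 := by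
    intro j
    rw [hdiag j, Complex.norm_real, Real.norm_eq_abs, abs_of_nonneg (sq_nonneg _)]
  have hgb : ∀ j ℓ, j ≠ ℓ → ‖g j ℓ‖ ≤ μ * (d j * d ℓ) := by
    intro j ℓ hne
    have := hμ j ℓ hne
    rw [div_le_iff₀ (mul_pos (hdpos j) (hdpos ℓ))] at this
    linarith
  -- invertibility of the Gram matrix
  set M0 := subCols A S with hM0
  set G := M0ᴴ * M0 with hG
  have hGentry : ∀ p q : {z // z ∈ S}, G p q = g (p : Fin N) (q : Fin N) := by
    intro p q
    simp [hG, hM0, Matrix.mul_apply, subCols, Matrix.conjTranspose_apply, hg,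
      dotProduct]
  have hScard : S.card ≤ k := by
    rw [← hcard]; exact Finset.card_le_card hS
  have hdet : G.det ≠ 0 := by
    apply det_ne_zero_of_sum_row_lt_diag
    intro p
    have hb : ∀ q ∈ Finset.univ.erase p, ‖G p q‖ ≤ μ * (d (p : Fin N) * dmax) := by
      intro q hq
      have hne : (p : Fin N) ≠ (q : Fin N) := by
        intro h
        exact (Finset.mem_erase.mp hq).1 (Subtype.ext h).symm
      rw [hGentry]
      refine le_trans (hgb _ _ hne) ?_
      nlinarith [mul_le_mul_of_nonneg_left (hdmax (q : Fin N))
        (mul_nonneg hμ0 (hdpos (p : Fin N)).le)]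
    calc ∑ q ∈ Finset.univ.erase p, ‖G p q‖
        ≤ (Finset.univ.erase p).card • (μ * (d (p : Fin N) * dmax)) :=
          Finset.sum_le_card_nsmul _ _ _ hb
      _ = ((Finset.univ.erase p).card : ℝ) * (μ * (d (p : Fin N) * dmax)) := by
          rw [nsmul_eq_mul]
      _ ≤ ((k : ℝ) - 1) * (μ * (d (p : Fin N) * dmax)) := by
          have hc1 : (Finset.univ.erase p).card ≤ k - 1 := by
            have := Finset.card_erase_of_mem (Finset.mem_univ p)
            rw [this]
            have : Fintype.card {z // z ∈ S} = S.card := Fintype.card_coe S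
            simp only [Finset.card_univ, this]
            omega
          have hc2 : ((Finset.univ.erase p).card : ℝ) ≤ (k : ℝ) - 1 := by
            have := (Nat.cast_le (α := ℝ)).mpr hc1
            rw [Nat.cast_sub hk] at this
            simpa using this
          exact mul_le_mul_of_nonneg_right hc2
            (mul_nonneg hμ0 (mul_nonneg (hdpos _).le hdmax0.le))
      _ < ‖G p p‖ := by
          rw [hGentry, hdiagnorm]
          nlinarith [mul_lt_mul_of_pos_right
            (lt_of_lt_of_le hkey (hdmin (p : Fin N))) (hdpos (p : Fin N))]
  have hGinv : G * G⁻¹ = 1 := Matrix.mul_nonsing_inv _ (Ne.isUnit hdet)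
  -- the residual
  set z : {z // z ∈ S} → ℂ := G⁻¹.mulVec (M0ᴴ.mulVec y) with hz
  set r := lsResidual A y S with hrdef
  have hry : r = y - M0.mulVec z := by rw [hrdef, lsResidual]
  -- orthogonality to selected columns
  have hMr : M0ᴴ.mulVec r = 0 := by
    rw [hry, Matrix.mulVec_sub, Matrix.mulVec_mulVec, ← hG, hz,
      Matrix.mulVec_mulVec, hGinv, Matrix.one_mulVec, sub_self]
  have horth : ∀ j ∈ S, dotProduct (star fun m => A m j) r = 0 := by
    intro j hj
    have := congrFun hMr ⟨j, hj⟩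
    simpa [hM0, Matrix.mulVec, Matrix.conjTranspose_apply, subCols, dotProduct] using this
  -- the error vector w
  set zext : Fin N → ℂ := fun j => if h : j ∈ S then z ⟨j, h⟩ else 0 with hzext
  set w : Fin N → ℂ := fun j => x j - zext j with hwdef
  have hMz : M0.mulVec z = A.mulVec zext := by
    funext m
    simp only [Matrix.mulVec, dotProduct, hM0, subCols, Matrix.of_apply]
    rw [show (∑ j, A m j * zext j) = ∑ j ∈ S, A m j * zext j from
      (Finset.sum_subset (Finset.subset_univ S) (fun j _ hj => by
        simp [hzext, dif_neg hj])).symm]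
    rw [← Finset.sum_attach S (fun j => A m j * zext j)]
    refine Finset.sum_congr rfl fun p _ => ?_
    simp [hzext, dif_pos p.2]
  have hr : r = A.mulVec w + v := by
    rw [hry, hMz, hy]
    funext m
    have : w = x - zext := rfl
    rw [this, Matrix.mulVec_sub]
    simp
    ring
  have hw0 : ∀ j, j ∉ Λ → w j = 0 := by
    intro j hj
    have hx0 : x j = 0 := by
      by_contra h
      exact hj ((hxsupp j).mp h)
    have hz0 : zext j = 0 := dif_neg (fun h => hj (hS h))
    simp [hwdef, hx0, hz0]
  -- correlation formula
  have hcorr : ∀ j, dotProduct (star fun m => A m j) r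
      = (∑ ℓ ∈ Λ, g j ℓ * w ℓ) + dotProduct (star fun m => A m j) v := by
    intro j
    rw [hr, dotProduct_add]
    congr 1
    have h1 : dotProduct (star fun m => A m j) (A.mulVec w)
        = ∑ ℓ, g j ℓ * w ℓ := by
      simp only [dotProduct, Matrix.mulVec, Pi.star_apply, hg, Finset.mul_sum,
        Finset.sum_mul]
      rw [Finset.sum_comm]
      exact Finset.sum_congr rfl fun ℓ _ => Finset.sum_congr rfl fun m _ => by ring
    rw [h1]
    exact (Finset.sum_subset (Finset.subset_univ Λ) (fun ℓ _ hℓ => by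
      rw [hw0 ℓ hℓ, mul_zero])).symm
  -- max coordinate of w
  obtain ⟨j0, hj0Λ, hj0⟩ := Finset.exists_mem_eq_sup' hΛne (fun ℓ => ‖w ℓ‖)
  set W := ‖w j0‖ with hWdef
  have hW : ∀ ℓ ∈ Λ, ‖w ℓ‖ ≤ W := fun ℓ hℓ => hj0 ▸ Finset.le_sup' (fun ℓ => ‖w ℓ‖) hℓ
  have hWx : x_min ≤ W := by
    obtain ⟨t, htΛ, htS⟩ := Finset.exists_of_ssubset (lt_of_le_of_ne hS hSne)
    have : w t = x t := by simp [hwdef, hzext, dif_neg htS]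
    calc x_min ≤ ‖x t‖ := hxmin t htΛ
      _ = ‖w t‖ := by rw [this]
      _ ≤ W := hW t htΛ
  have hW0 : 0 < W := lt_of_lt_of_le hxminpos hWx
  -- noise bound
  have hvb : ∀ j, ‖dotProduct (star fun m => A m j) v‖ < ρ * d j := by
    intro j
    have := hv j
    rw [div_lt_iff₀ (hdpos j)] at this
    linarith
  -- lower bound at j0
  set LB := dmin * W - ((k : ℝ) - 1) * μ * dmax * W - ρ with hLB
  have hklow : LB < ‖dotProduct (star fun m => A m j0) r‖ / d j0 := by
    rw [lt_div_iff₀ (hdpos j0)]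
    have hsplit : dotProduct (star fun m => A m j0) r
        = g j0 j0 * w j0 + ((∑ ℓ ∈ Λ.erase j0, g j0 ℓ * w ℓ)
            + dotProduct (star fun m => A m j0) v) := by
      rw [hcorr j0, ← Finset.add_sum_erase _ _ hj0Λ]
      ring
    have hnorm1 : ‖g j0 j0 * w j0‖ ≤ ‖dotProduct (star fun m => A m j0) r‖
        + (‖∑ ℓ ∈ Λ.erase j0, g j0 ℓ * w ℓ‖
            + ‖dotProduct (star fun m => A m j0) v‖) := by
      calc ‖g j0 j0 * w j0‖
          = ‖dotProduct (star fun m => A m j0) r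
              - ((∑ ℓ ∈ Λ.erase j0, g j0 ℓ * w ℓ)
                + dotProduct (star fun m => A m j0) v)‖ := by
            rw [hsplit]; congr 1; ring
        _ ≤ _ := by
            refine le_trans (norm_sub_le _ _) ?_
            gcongr
            exact norm_add_le _ _
    have hd1 : ‖g j0 j0 * w j0‖ = d j0 ^ 2 * W := by
      rw [norm_mul, hdiagnorm]
    have hsum : ‖∑ ℓ ∈ Λ.erase j0, g j0 ℓ * w ℓ‖ ≤ ((k : ℝ) - 1) * (μ * (d j0 * dmax) * W) := by
      refine le_trans (norm_sum_le _ _) ?_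
      calc ∑ ℓ ∈ Λ.erase j0, ‖g j0 ℓ * w ℓ‖
          ≤ ∑ ℓ ∈ Λ.erase j0, μ * (d j0 * dmax) * W := by
            refine Finset.sum_le_sum fun ℓ hℓ => ?_
            rw [norm_mul]
            have hne : j0 ≠ ℓ := fun h => (Finset.mem_erase.mp hℓ).1 h.symm
            have h1 : ‖g j0 ℓ‖ ≤ μ * (d j0 * dmax) := by
              refine le_trans (hgb j0 ℓ hne) ?_
              nlinarith [mul_le_mul_of_nonneg_left (hdmax ℓ) (mul_nonneg hμ0 (hdpos j0).le)]
            have h2 : ‖w ℓ‖ ≤ W := hW ℓ (Finset.mem_of_mem_erase hℓ)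
            have := mul_le_mul h1 h2 (norm_nonneg _)
              (mul_nonneg hμ0 (mul_nonneg (hdpos _).le hdmax0.le))
            linarith
        _ = ((Λ.erase j0).card : ℝ) * (μ * (d j0 * dmax) * W) := by
            rw [Finset.sum_const, nsmul_eq_mul]
        _ = ((k : ℝ) - 1) * (μ * (d j0 * dmax) * W) := by
            rw [Finset.card_erase_of_mem hj0Λ, hcard, Nat.cast_sub hk]
            norm_num
    have hnv := hvb j0
    rw [hLB]
    nlinarith [hd1, hsum, hnv, hnorm1,
      mul_le_mul_of_nonneg_right (hdmin j0) (mul_nonneg hW0.le (hdpos j0).le)]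
  -- upper bound off the support
  set UB := (k : ℝ) * μ * dmax * W + ρ with hUB
  have hkup : ∀ j, j ∉ Λ → ‖dotProduct (star fun m => A m j) r‖ / d j < UB := by
    intro j hjΛ
    rw [div_lt_iff₀ (hdpos j)]
    have hsum : ‖∑ ℓ ∈ Λ, g j ℓ * w ℓ‖ ≤ (k : ℝ) * (μ * (d j * dmax) * W) := by
      refine le_trans (norm_sum_le _ _) ?_
      calc ∑ ℓ ∈ Λ, ‖g j ℓ * w ℓ‖
          ≤ ∑ ℓ ∈ Λ, μ * (d j * dmax) * W := by
            refine Finset.sum_le_sum fun ℓ hℓ => ?_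
            rw [norm_mul]
            have hne : j ≠ ℓ := fun h => hjΛ (h ▸ hℓ)
            have h1 : ‖g j ℓ‖ ≤ μ * (d j * dmax) := by
              refine le_trans (hgb j ℓ hne) ?_
              nlinarith [mul_le_mul_of_nonneg_left (hdmax ℓ) (mul_nonneg hμ0 (hdpos j).le)]
            have h2 : ‖w ℓ‖ ≤ W := hW ℓ hℓ
            have := mul_le_mul h1 h2 (norm_nonneg _)
              (mul_nonneg hμ0 (mul_nonneg (hdpos _).le hdmax0.le))
            linarith
        _ = ((k : ℝ)) * (μ * (d j * dmax) * W) := by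
            rw [Finset.sum_const, nsmul_eq_mul, hcard]
    have hnv := hvb j
    calc ‖dotProduct (star fun m => A m j) r‖
        ≤ ‖∑ ℓ ∈ Λ, g j ℓ * w ℓ‖ + ‖dotProduct (star fun m => A m j) v‖ := by
          rw [hcorr j]; exact norm_add_le _ _
      _ < (k : ℝ) * (μ * (d j * dmax) * W) + ρ * d j := by linarith
      _ ≤ UB * d j := by
          rw [hUB]; ring_nf; nlinarith [hdpos j, hW0.le]
  have hUBLB : UB ≤ LB := by
    rw [hUB, hLB]
    nlinarith [mul_le_mul_of_nonneg_left hWx hc.le]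
  have hUBpos : 0 < UB := by
    rw [hUB]
    nlinarith [mul_nonneg (mul_nonneg (mul_nonneg (Nat.cast_nonneg (α := ℝ) k) hμ0)
      hdmax0.le) hW0.le]
  have hval0 := hs j0
  constructor
  · by_contra hsΛ
    have h1 := hkup s hsΛ
    linarith
  · intro hsS
    have h0 : ‖dotProduct (star fun m => A m s) r‖ / d s = 0 := by
      rw [horth s hsS]; simp
    rw [h0] at hval0
    linarith

/-- Theorem 1: under the noise event `max_j |a_j* v|/d_j < ρ` and the condition
`d_min x_min − (2k−1) μ d_max x_min ≥ 2ρ`, any run of the OMP algorithm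
(greedy selection maximizing `|a_j* r|/d_j`, least squares on the selected
columns) for `k` iterations selects exactly the support `Λ` of `x`. -/
theorem omp_support_recovery (M N : ℕ) (hN : 0 < N)
    (A : Matrix (Fin M) (Fin N) ℂ) (d : Fin N → ℝ)
    (hd : ∀ j, d j = Real.sqrt (∑ m, ‖A m j‖ ^ 2))
    (hdpos : ∀ j, 0 < d j)
    (μ : ℝ) (hμ0 : 0 ≤ μ)
    (hμ : ∀ j ℓ, j ≠ ℓ →
      ‖dotProduct (star fun m => A m j) (fun m => A m ℓ)‖ / (d j * d ℓ) ≤ μ)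
    (Λ : Finset (Fin N)) (k : ℕ) (hk : 1 ≤ k) (hcard : Λ.card = k)
    (x : Fin N → ℂ) (hxsupp : ∀ i, x i ≠ 0 ↔ i ∈ Λ)
    (x_min : ℝ) (hxmin : ∀ i ∈ Λ, x_min ≤ ‖x i‖) (hxminpos : 0 < x_min)
    (v : Fin M → ℂ) (ρ : ℝ) (hρ : 0 ≤ ρ)
    (hv : ∀ j, ‖dotProduct (star fun m => A m j) v‖ / d j < ρ)
    (y : Fin M → ℂ) (hy : y = A.mulVec x + v)
    (hcond :
      (Finset.univ.inf' (Finset.univ_nonempty_iff.mpr (Fin.pos_iff_nonempty.mp hN)) d) * x_min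
        - (2 * (k : ℝ) - 1) * μ *
          (Finset.univ.sup' (Finset.univ_nonempty_iff.mpr (Fin.pos_iff_nonempty.mp hN)) d)
          * x_min ≥ 2 * ρ)
    -- a run of the OMP algorithm:
    (supp : ℕ → Finset (Fin N)) (sel : ℕ → Fin N)
    (hsupp0 : supp 0 = ∅)
    (hstep : ∀ i < k, supp (i + 1) = insert (sel i) (supp i))
    (hsel : ∀ i < k, ∀ j,
      ‖dotProduct (star fun m => A m j) (lsResidual A y (supp i))‖ / d j ≤
        ‖dotProduct (star fun m => A m (sel i)) (lsResidual A y (supp i))‖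
          / d (sel i)) :
    supp k = Λ := by
  classical
  have hρ' : 0 < ρ :=
    lt_of_le_of_lt (div_nonneg (norm_nonneg _) (hdpos ⟨0, hN⟩).le) (hv ⟨0, hN⟩)
  have hdmin : ∀ j,
      Finset.univ.inf' (Finset.univ_nonempty_iff.mpr (Fin.pos_iff_nonempty.mp hN)) d ≤ d j :=
    fun j => Finset.inf'_le d (Finset.mem_univ j)
  have hdmax : ∀ j,
      d j ≤ Finset.univ.sup' (Finset.univ_nonempty_iff.mpr (Fin.pos_iff_nonempty.mp hN)) d :=
    fun j => Finset.le_sup' d (Finset.mem_univ j)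
  have main : ∀ i ≤ k, supp i ⊆ Λ ∧ (supp i).card = i := by
    intro i
    induction i with
    | zero => intro _; simp [hsupp0]
    | succ n ih =>
      intro hnk
      have hn : n < k := hnk
      obtain ⟨hsub, hcardn⟩ := ih (le_of_lt hn)
      have hne : supp n ≠ Λ := by
        intro h; rw [h, hcard] at hcardn; omega
      obtain ⟨hselΛ, hselS⟩ := omp_step A d hd hdpos μ hμ0 hμ Λ k hk hcard x hxsupp
        x_min hxmin hxminpos v ρ hρ' hv y hy _ _ hdmin hdmax hcond (supp n) hsub hne
        (sel n) (hsel n hn)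
      rw [hstep n hn]
      exact ⟨Finset.insert_subset hselΛ hsub,
        by rw [Finset.card_insert_of_notMem hselS, hcardn]⟩
  obtain ⟨hsub, hcardk⟩ := main k le_rfl
  apply Finset.eq_of_subset_of_card_le hsub
  rw [hcardk, hcard]
end

section
/- (Gershgorin bound on the Gram matrix) Let A_Λ be the M×k submatrix of A formed by columns indexed by Λ, |Λ| = k. Every eigenvalue λ of the Gram matrix A_Λ* A_Λ satisfies λ ≥ d_min·(d_min − (k−1)·μ·d_max), where d_min, d_max are the minimum and maximum column norms of A and μ its coherence. -/
open Matrix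

lemma hermitian_hasEigenvalue {n : Type*} [Fintype n] [DecidableEq n]
    {G : Matrix n n ℂ} (hG : G.IsHermitian) (i : n) :
    Module.End.HasEigenvalue (Matrix.toLin' G) ((hG.eigenvalues i : ℝ) : ℂ) := by
  apply Module.End.hasEigenvalue_of_hasEigenvector
    (x := (hG.eigenvectorBasis i : n → ℂ))
  constructor
  · rw [Module.End.mem_eigenspace_iff]
    show G *ᵥ (hG.eigenvectorBasis i : n → ℂ) = _
    have h := hG.mulVec_eigenvectorBasis i
    funext j
    have h2 := congrFun h j
    simpa [Complex.real_smul] using h2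
  · simpa using hG.eigenvectorBasis.orthonormal.ne_zero i



/-- Gershgorin bound on the Gram matrix of a column submatrix: every
eigenvalue of `A_Λ* A_Λ` is at least `d_min (d_min − (k−1) μ d_max)`. -/
theorem gram_eigenvalue_lower_bound (M N : ℕ) (hN : 0 < N)
    (A : Matrix (Fin M) (Fin N) ℂ) (d : Fin N → ℝ)
    (hd : ∀ j, d j = Real.sqrt (∑ m, ‖A m j‖ ^ 2))
    (hdpos : ∀ j, 0 < d j)
    (μ : ℝ)
    (hμ : ∀ j ℓ, j ≠ ℓ →
      ‖dotProduct (star fun m => A m j) (fun m => A m ℓ)‖ / (d j * d ℓ) ≤ μ)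
    (Λ : Finset (Fin N)) :
    ∀ i,
      (Finset.univ.inf' (Finset.univ_nonempty_iff.mpr (Fin.pos_iff_nonempty.mp hN)) d) *
        ((Finset.univ.inf' (Finset.univ_nonempty_iff.mpr (Fin.pos_iff_nonempty.mp hN)) d)
          - ((Λ.card : ℝ) - 1) * μ *
            (Finset.univ.sup' (Finset.univ_nonempty_iff.mpr (Fin.pos_iff_nonempty.mp hN)) d))
      ≤ (Matrix.isHermitian_conjTranspose_mul_self
          (Matrix.of fun (m : Fin M) (j : Λ) => A m j)).eigenvalues i := by
  intro i
  set B := Matrix.of fun (m : Fin M) (j : Λ) => A m j with hB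
  set hG := Matrix.isHermitian_conjTranspose_mul_self B
  set lam := hG.eigenvalues i with hlam
  set dmin := Finset.univ.inf' (Finset.univ_nonempty_iff.mpr (Fin.pos_iff_nonempty.mp hN)) d
    with hdmin
  set dmax := Finset.univ.sup' (Finset.univ_nonempty_iff.mpr (Fin.pos_iff_nonempty.mp hN)) d
    with hdmax
  have hdmin_le : ∀ j, dmin ≤ d j := fun j => Finset.inf'_le d (Finset.mem_univ j)
  have hle_dmax : ∀ j, d j ≤ dmax := fun j => Finset.le_sup' d (Finset.mem_univ j)
  have hdmin_pos : 0 < dmin := by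
    rw [hdmin, Finset.lt_inf'_iff]
    exact fun j _ => hdpos j
  have hlam_nonneg : 0 ≤ lam := Matrix.eigenvalues_conjTranspose_mul_self_nonneg B i
  -- diagonal entries
  have hGdiag : ∀ k : Λ, (Bᴴ * B) k k = ((d (k : Fin N)) ^ 2 : ℝ) := by
    intro k
    rw [Matrix.mul_apply]
    have : ∀ m : Fin M, Bᴴ k m * B m k = ((‖A m (k : Fin N)‖ ^ 2 : ℝ) : ℂ) := by
      intro m
      rw [Matrix.conjTranspose_apply]
      simpa [hB] using RCLike.conj_mul (A m (k : Fin N))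
    simp_rw [this]
    rw [← Complex.ofReal_sum]
    norm_cast
    rw [hd, Real.sq_sqrt]
    positivity
  -- off-diagonal entries
  have hGoff : ∀ k j : Λ, j ≠ k → ‖(Bᴴ * B) k j‖ ≤ μ * (d (k : Fin N) * d (j : Fin N)) := by
    intro k j hjk
    have hne : (k : Fin N) ≠ (j : Fin N) := fun h => hjk (Subtype.ext h.symm)
    have h1 := hμ (k : Fin N) (j : Fin N) hne
    have hpos : 0 < d (k : Fin N) * d (j : Fin N) :=
      mul_pos (hdpos _) (hdpos _)
    rw [div_le_iff₀ hpos] at h1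
    have : (Bᴴ * B) k j =
        dotProduct (star fun m => A m (k : Fin N)) (fun m => A m (j : Fin N)) := by
      rw [Matrix.mul_apply, dotProduct]
      simp [hB, Matrix.conjTranspose_apply]
    rw [this]
    linarith
  -- Gershgorin
  obtain ⟨k, hk⟩ := eigenvalue_mem_ball (hermitian_hasEigenvalue hG i)
  rw [Metric.mem_closedBall, Complex.dist_eq, hGdiag k, ← Complex.ofReal_sub,
    Complex.norm_real, Real.norm_eq_abs] at hk
  set S : ℝ := ∑ j ∈ Finset.univ.erase k, ‖(Bᴴ * B) k j‖ with hS
  have hcard : (Finset.univ.erase k).card = Λ.card - 1 := by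
    rw [Finset.card_erase_of_mem (Finset.mem_univ k)]
    simp [Fintype.card_coe]
  have hc1 : 1 ≤ Λ.card := by
    have : (k : Fin N) ∈ Λ := k.2
    exact Finset.card_pos.mpr ⟨_, this⟩
  have hSle : S ≤ ((Λ.card : ℝ) - 1) * (μ * (d (k : Fin N) * dmax)) := by
    rcases eq_or_lt_of_le hc1 with h1 | h2
    · have : Finset.univ.erase k = (∅ : Finset Λ) := by
        rw [← Finset.card_eq_zero, hcard, ← h1]
      rw [hS, this, Finset.sum_empty, ← h1]
      norm_num
    · -- μ ≥ 0
      obtain ⟨a, b, ha, hb, hab⟩ := Finset.one_lt_card_iff.mp h2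
      have hμ0 : 0 ≤ μ := le_trans (div_nonneg (norm_nonneg _)
        (le_of_lt (mul_pos (hdpos a) (hdpos b)))) (hμ a b hab)
      have : S ≤ ∑ j ∈ Finset.univ.erase k, μ * (d (k : Fin N) * dmax) := by
        apply Finset.sum_le_sum
        intro j hj
        have hjk : j ≠ k := Finset.ne_of_mem_erase hj
        refine le_trans (hGoff k j hjk) ?_
        have h3 := hle_dmax (j : Fin N)
        have hdk := (hdpos (k : Fin N)).le
        nlinarith [mul_nonneg (mul_nonneg hμ0 hdk) (sub_nonneg.mpr h3)]
      refine le_trans this ?_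
      rw [Finset.sum_const, hcard, nsmul_eq_mul]
      rw [Nat.cast_sub hc1]
      norm_num
  have hlam_ge : (d (k : Fin N)) ^ 2 - S ≤ lam := by
    have := abs_le.mp hk
    linarith [this.1]
  -- final arithmetic
  rcases le_or_gt dmin (((Λ.card : ℝ) - 1) * μ * dmax) with hcase | hcase
  · nlinarith
  · have h1 : dmin ≤ d (k : Fin N) := hdmin_le _
    have h2 : ((Λ.card : ℝ) - 1) * μ * dmax < d (k : Fin N) := lt_of_lt_of_le hcase h1
    nlinarith
end

section
/- (Lemma 2) Let A_Λ be the submatrix of A with columns in Λ, |Λ| = k, and suppose d_min − (k−1)·μ·d_max > 0 so that A_Λ* A_Λ is invertible. Then the largest eigenvalue of (A_Λ* A_Λ)^{-1} satisfies λ_max((A_Λ* A_Λ)^{-1}) ≤ 1/(d_min·(d_min − (k−1)·μ·d_max)). -/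
open Matrix in
/-- Lemma 2: the largest eigenvalue of `(A_Λ* A_Λ)⁻¹` is at most
`1/(d_min (d_min − (k−1) μ d_max))`. -/
theorem inverse_gram_eigenvalue_upper_bound (M N : ℕ) (hN : 0 < N)
    (A : Matrix (Fin M) (Fin N) ℂ) (d : Fin N → ℝ)
    (hd : ∀ j, d j = Real.sqrt (∑ m, ‖A m j‖ ^ 2))
    (hdpos : ∀ j, 0 < d j)
    (μ : ℝ) (hμ0 : 0 ≤ μ)
    (hμ : ∀ j ℓ, j ≠ ℓ →
      ‖dotProduct (star fun m => A m j) (fun m => A m ℓ)‖ / (d j * d ℓ) ≤ μ)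
    (Λ : Finset (Fin N))
    (hpos :
      0 < (Finset.univ.inf' (Finset.univ_nonempty_iff.mpr (Fin.pos_iff_nonempty.mp hN)) d)
          - ((Λ.card : ℝ) - 1) * μ *
            (Finset.univ.sup' (Finset.univ_nonempty_iff.mpr (Fin.pos_iff_nonempty.mp hN)) d)) :
    ∀ i,
      ((Matrix.isHermitian_conjTranspose_mul_self
          (Matrix.of fun (m : Fin M) (j : Λ) => A m j)).inv).eigenvalues i ≤
        1 / ((Finset.univ.inf' (Finset.univ_nonempty_iff.mpr (Fin.pos_iff_nonempty.mp hN)) d) *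
          ((Finset.univ.inf' (Finset.univ_nonempty_iff.mpr (Fin.pos_iff_nonempty.mp hN)) d)
            - ((Λ.card : ℝ) - 1) * μ *
              (Finset.univ.sup'
                (Finset.univ_nonempty_iff.mpr (Fin.pos_iff_nonempty.mp hN)) d))) := by
  intro i
  classical
  set dmin := Finset.univ.inf' (Finset.univ_nonempty_iff.mpr (Fin.pos_iff_nonempty.mp hN)) d
    with hdmin
  set dmax := Finset.univ.sup' (Finset.univ_nonempty_iff.mpr (Fin.pos_iff_nonempty.mp hN)) d
    with hdmax
  have hdminle : ∀ j, dmin ≤ d j := fun j => Finset.inf'_le d (Finset.mem_univ j)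
  have hledmax : ∀ j, d j ≤ dmax := fun j => Finset.le_sup' d (Finset.mem_univ j)
  have hdminpos : 0 < dmin := by
    obtain ⟨j, -, hj⟩ := Finset.exists_mem_eq_inf' (Finset.univ_nonempty_iff.mpr
      (Fin.pos_iff_nonempty.mp hN)) d
    rw [← hdmin] at hj
    rw [hj]; exact hdpos j
  have hdmaxpos : 0 < dmax := hdminpos.trans_le ((hdminle (i : Fin N)).trans (hledmax _))
  have hcard : 1 ≤ Λ.card := Finset.card_pos.mpr ⟨(i : Fin N), i.2⟩
  have hc0 : 0 ≤ ((Λ.card : ℝ) - 1) * μ * dmax := by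
    have h1 : (1 : ℝ) ≤ (Λ.card : ℝ) := by exact_mod_cast hcard
    apply mul_nonneg (mul_nonneg (by linarith) hμ0) hdmaxpos.le
  set B := Matrix.of fun (m : Fin M) (j : Λ) => A m j with hB
  have hG := Matrix.isHermitian_conjTranspose_mul_self B
  set t := hG.inv.eigenvalues i with ht
  have hrhs : 0 < dmin * (dmin - ((Λ.card : ℝ) - 1) * μ * dmax) := mul_pos hdminpos hpos
  rcases le_or_gt t 0 with htle | htpos
  · exact htle.trans (le_of_lt (by positivity))
  -- t > 0
  have hv := hG.inv.mulVec_eigenvectorBasis i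
  set v : Λ → ℂ := ⇑(hG.inv.eigenvectorBasis i) with hvdef
  have hvne : v ≠ 0 := by
    intro h
    exact hG.inv.eigenvectorBasis.orthonormal.ne_zero i (by ext x; exact congrFun h x)
  have hunit : IsUnit (Bᴴ * B).det := by
    by_contra hn
    have h0 : (Bᴴ * B)⁻¹ = 0 := Matrix.nonsing_inv_apply_not_isUnit _ hn
    have hz : t • v = 0 := by rw [← hv, h0, Matrix.zero_mulVec]
    exact hvne ((smul_eq_zero.mp hz).resolve_left (ne_of_gt htpos))
  have hGv : (Bᴴ * B) *ᵥ v = ((t : ℂ)⁻¹) • v := by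
    have ht0 : (t : ℂ) ≠ 0 := by exact_mod_cast ne_of_gt htpos
    have h1 : (Bᴴ * B) *ᵥ ((Bᴴ * B)⁻¹ *ᵥ v) = v := by
      rw [Matrix.mulVec_mulVec, Matrix.mul_nonsing_inv _ hunit, Matrix.one_mulVec]
    rw [hv, Matrix.mulVec_smul] at h1
    have h2 : (t : ℂ) • ((Bᴴ * B) *ᵥ v) = v := by
      funext x
      have h3 := congrFun h1 x
      simpa [Complex.real_smul] using h3
    calc (Bᴴ * B) *ᵥ v = ((t : ℂ)⁻¹ * (t : ℂ)) • ((Bᴴ * B) *ᵥ v) := by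
          rw [inv_mul_cancel₀ ht0, one_smul]
      _ = (t : ℂ)⁻¹ • v := by rw [mul_smul, h2]
  have hev : Module.End.HasEigenvalue (Matrix.toLin' (Bᴴ * B)) ((t : ℂ)⁻¹) := by
    apply Module.End.hasEigenvalue_of_hasEigenvector (x := v)
    refine ⟨?_, hvne⟩
    rw [Module.End.mem_eigenspace_iff, Matrix.toLin'_apply, hGv]
  obtain ⟨j, hj⟩ := eigenvalue_mem_ball hev
  rw [Metric.mem_closedBall, dist_eq_norm] at hj
  -- diagonal entry
  have hGjj : (Bᴴ * B) j j = (((d (j : Fin N)) ^ 2 : ℝ) : ℂ) := by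
    have : (Bᴴ * B) j j = ((∑ m, ‖A m (j : Fin N)‖ ^ 2 : ℝ) : ℂ) := by
      rw [Matrix.mul_apply]
      push_cast
      refine Finset.sum_congr rfl fun m _ => ?_
      simp [hB, Matrix.conjTranspose_apply, ← Complex.normSq_eq_conj_mul_self,
        Complex.normSq_eq_norm_sq]
    rw [this, hd]
    norm_cast
    rw [Real.sq_sqrt]
    positivity
  -- off-diagonal bound
  have hoff : ∀ ℓ : Λ, ℓ ≠ j → ‖(Bᴴ * B) j ℓ‖ ≤ μ * (d (j : Fin N) * dmax) := by
    intro ℓ hℓ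
    have hne : (j : Fin N) ≠ (ℓ : Fin N) := fun h => hℓ.symm (Subtype.ext h)
    have h1 := hμ (j : Fin N) (ℓ : Fin N) hne
    have hden : 0 < d (j : Fin N) * d (ℓ : Fin N) := mul_pos (hdpos _) (hdpos _)
    rw [div_le_iff₀ hden] at h1
    have hGeq : (Bᴴ * B) j ℓ = dotProduct (star fun m => A m (j : Fin N))
        (fun m => A m (ℓ : Fin N)) := by
      rw [Matrix.mul_apply]
      rfl
    rw [hGeq]
    calc ‖_‖ ≤ μ * (d (j : Fin N) * d (ℓ : Fin N)) := h1
      _ ≤ μ * (d (j : Fin N) * dmax) := by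
          apply mul_le_mul_of_nonneg_left _ hμ0
          exact mul_le_mul_of_nonneg_left (hledmax _) (hdpos _).le
  -- row sum bound
  have hrow : (∑ ℓ ∈ Finset.univ.erase j, ‖(Bᴴ * B) j ℓ‖) ≤
      ((Λ.card : ℝ) - 1) * (μ * (d (j : Fin N) * dmax)) := by
    calc (∑ ℓ ∈ Finset.univ.erase j, ‖(Bᴴ * B) j ℓ‖)
        ≤ ∑ ℓ ∈ Finset.univ.erase j, μ * (d (j : Fin N) * dmax) :=
          Finset.sum_le_sum fun ℓ hℓ => hoff ℓ (Finset.ne_of_mem_erase hℓ)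
      _ = ((Finset.univ.erase j).card : ℝ) * (μ * (d (j : Fin N) * dmax)) := by
          rw [Finset.sum_const, nsmul_eq_mul]
      _ = ((Λ.card : ℝ) - 1) * (μ * (d (j : Fin N) * dmax)) := by
          congr 1
          rw [Finset.card_erase_of_mem (Finset.mem_univ j), Finset.card_univ]
          have : Fintype.card Λ = Λ.card := Fintype.card_coe Λ
          rw [this]
          have : (1 : ℕ) ≤ Λ.card := hcard
          push_cast [Nat.cast_sub this]
          ring
  -- real part extraction
  have hre : ((d (j : Fin N)) ^ 2 : ℝ) - (∑ ℓ ∈ Finset.univ.erase j, ‖(Bᴴ * B) j ℓ‖) ≤ t⁻¹ := by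
    have : ‖(((t⁻¹ : ℝ) : ℂ)) - (Bᴴ * B) j j‖ = |t⁻¹ - (d (j : Fin N)) ^ 2| := by
      rw [hGjj, ← Complex.ofReal_sub, Complex.norm_real, Real.norm_eq_abs]
    rw [Complex.ofReal_inv] at this
    rw [this] at hj
    have := abs_le.mp hj
    linarith [this.1]
  -- combine
  set r := d (j : Fin N) with hr
  have hrge : dmin ≤ r := hdminle _
  have key : dmin * (dmin - ((Λ.card : ℝ) - 1) * μ * dmax) ≤ t⁻¹ := by
    have h1 : r ^ 2 - ((Λ.card : ℝ) - 1) * (μ * (r * dmax)) ≤ t⁻¹ := by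
      have := hrow
      nlinarith [hre]
    nlinarith [hc0, hpos, hrge, hdminpos]
  have htinv : t * t⁻¹ = 1 := mul_inv_cancel₀ (ne_of_gt htpos)
  rw [one_div]
  rw [le_inv_comm₀ htpos hrhs] at *
  exact key
end

section
/- (Theorem 2, MSE bound) Let y = Ax + v with x supported on Λ, |Λ| = k, suppose max_{j∈[N]} |a_j* v|/d_j < ρ and d_min − (k−1)·μ·d_max > 0. Let x̂ be supported on Λ with x̂_Λ = (A_Λ* A_Λ)^{-1} A_Λ* y (the least-squares estimate on the true support). Then ‖x̂ − x‖₂² ≤ (d_max/d_min)² · k·ρ² / (d_min − (k−1)·μ·d_max)². -/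
open Matrix Finset

set_option maxHeartbeats 1000000 in
/-- Theorem 2 (MSE bound): under the noise event and
`d_min − (k−1) μ d_max > 0`, the least-squares estimate on the true support
satisfies `‖x̂ − x‖₂² ≤ (d_max/d_min)² k ρ² / (d_min − (k−1) μ d_max)²`. -/
theorem omp_mse_bound (M N : ℕ) (hN : 0 < N)
    (A : Matrix (Fin M) (Fin N) ℂ) (d : Fin N → ℝ)
    (hd : ∀ j, d j = Real.sqrt (∑ m, ‖A m j‖ ^ 2))
    (hdpos : ∀ j, 0 < d j)
    (μ : ℝ) (hμ0 : 0 ≤ μ)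
    (hμ : ∀ j ℓ, j ≠ ℓ →
      ‖dotProduct (star fun m => A m j) (fun m => A m ℓ)‖ / (d j * d ℓ) ≤ μ)
    (Λ : Finset (Fin N))
    (x : Fin N → ℂ) (hxsupp : ∀ i, i ∉ Λ → x i = 0)
    (v : Fin M → ℂ) (ρ : ℝ)
    (hv : ∀ j, ‖dotProduct (star fun m => A m j) v‖ / d j < ρ)
    (y : Fin M → ℂ) (hy : y = A.mulVec x + v)
    (hpos :
      0 < (Finset.univ.inf' (Finset.univ_nonempty_iff.mpr (Fin.pos_iff_nonempty.mp hN)) d)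
          - ((Λ.card : ℝ) - 1) * μ *
            (Finset.univ.sup' (Finset.univ_nonempty_iff.mpr (Fin.pos_iff_nonempty.mp hN)) d))
    (xhat : Fin N → ℂ) (hxhatsupp : ∀ i, i ∉ Λ → xhat i = 0)
    (hxhat : (fun j : Λ => xhat j) =
      ((Matrix.of fun (m : Fin M) (j : Λ) => A m j)ᴴ *
        (Matrix.of fun (m : Fin M) (j : Λ) => A m j))⁻¹.mulVec
        ((Matrix.of fun (m : Fin M) (j : Λ) => A m j)ᴴ.mulVec y)) :
    ∑ j, ‖xhat j - x j‖ ^ 2 ≤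
      ((Finset.univ.sup' (Finset.univ_nonempty_iff.mpr (Fin.pos_iff_nonempty.mp hN)) d) /
        (Finset.univ.inf' (Finset.univ_nonempty_iff.mpr (Fin.pos_iff_nonempty.mp hN)) d)) ^ 2 *
      ((Λ.card : ℝ) * ρ ^ 2) /
      ((Finset.univ.inf' (Finset.univ_nonempty_iff.mpr (Fin.pos_iff_nonempty.mp hN)) d)
        - ((Λ.card : ℝ) - 1) * μ *
          (Finset.univ.sup'
            (Finset.univ_nonempty_iff.mpr (Fin.pos_iff_nonempty.mp hN)) d)) ^ 2 := by
  set dmin := (Finset.univ.inf' (Finset.univ_nonempty_iff.mpr (Fin.pos_iff_nonempty.mp hN)) d) with hdmin_def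
  set dmax := (Finset.univ.sup' (Finset.univ_nonempty_iff.mpr (Fin.pos_iff_nonempty.mp hN)) d) with hdmax_def
  have hdmin_le : ∀ j, dmin ≤ d j := fun j => Finset.inf'_le _ (Finset.mem_univ j)
  have hle_dmax : ∀ j, d j ≤ dmax := fun j => Finset.le_sup' _ (Finset.mem_univ j)
  have hdminpos : 0 < dmin := by
    obtain ⟨j0, _, hj0⟩ := Finset.exists_mem_eq_inf' (Finset.univ_nonempty_iff.mpr (Fin.pos_iff_nonempty.mp hN)) d
    rw [hdmin_def, hj0]; exact hdpos j0
  have hdmaxpos : 0 < dmax := lt_of_lt_of_le hdminpos ((hdmin_le ⟨0, hN⟩).trans (hle_dmax ⟨0, hN⟩))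
  set K := (Λ.card : ℝ) with hK_def
  set c := (K - 1) * μ * dmax with hc_def
  have hρpos : 0 < ρ := by
    have := hv ⟨0, hN⟩
    exact lt_of_le_of_lt (div_nonneg (norm_nonneg _) (hdpos ⟨0, hN⟩).le) this
  -- RHS is nonnegative
  have hRHS : 0 ≤ (dmax / dmin) ^ 2 * (K * ρ ^ 2) / (dmin - c) ^ 2 := by positivity
  rcases Λ.eq_empty_or_nonempty with hΛe | hΛne
  · have hz : ∀ j, ‖xhat j - x j‖ ^ 2 = 0 := by
      intro j
      rw [hxhatsupp j (by simp [hΛe]), hxsupp j (by simp [hΛe])]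
      simp
    rw [Finset.sum_congr rfl (fun j _ => hz j), Finset.sum_const_zero]
    exact hRHS
  have hK1 : (1 : ℝ) ≤ K := by
    rw [hK_def]; exact_mod_cast Finset.card_pos.mpr hΛne
  set B : Matrix (Fin M) Λ ℂ := Matrix.of fun (m : Fin M) (j : Λ) => A m j with hB_def
  set G : Matrix Λ Λ ℂ := Bᴴ * B with hG_def
  have hKcard : (Fintype.card Λ : ℝ) = K := by rw [hK_def, Fintype.card_coe]
  set α := dmin * (dmin - c) with hα_def
  have hαpos : 0 < α := mul_pos hdminpos hpos
  -- diagonal entries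
  have hGdiag : ∀ j : Λ, G j j = ((d j ^ 2 : ℝ) : ℂ) := by
    intro j
    rw [hG_def, Matrix.mul_apply]
    have : (d (j : Fin N)) ^ 2 = ∑ m, ‖A m j‖ ^ 2 := by
      rw [hd]; exact Real.sq_sqrt (Finset.sum_nonneg fun m _ => by positivity)
    rw [this]
    push_cast
    refine Finset.sum_congr rfl fun m _ => ?_
    simp only [hB_def, Matrix.conjTranspose_apply, Matrix.of_apply]
    rw [Complex.star_def, RCLike.conj_mul]
    norm_cast
  -- off-diagonal bound
  have hGentry : ∀ j ℓ : Λ, G j ℓ = dotProduct (star fun m => A m (j:Fin N)) (fun m => A m (ℓ:Fin N)) := by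
    intro j ℓ
    rw [hG_def, Matrix.mul_apply]
    simp [dotProduct, hB_def, Matrix.conjTranspose_apply]
  have hGoff : ∀ j ℓ : Λ, j ≠ ℓ → ‖G j ℓ‖ ≤ μ * (d j * d ℓ) := by
    intro j ℓ hne
    have hcoene : (j : Fin N) ≠ (ℓ : Fin N) := fun h => hne (Subtype.ext h)
    have h1 := hμ j ℓ hcoene
    rw [div_le_iff₀ (mul_pos (hdpos _) (hdpos _))] at h1
    rw [hGentry j ℓ]
    linarith
  -- quadratic form lower bound
  have hquad : ∀ z : Λ → ℂ, α * ∑ j, ‖z j‖ ^ 2 ≤ (∑ j, (starRingEnd ℂ) (z j) * G.mulVec z j).re := by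
    intro z
    have hQ : (∑ j, (starRingEnd ℂ) (z j) * G.mulVec z j).re
        = ∑ j, ∑ ℓ, ((starRingEnd ℂ) (z j) * (G j ℓ * z ℓ)).re := by
      rw [Complex.re_sum]
      refine Finset.sum_congr rfl fun j _ => ?_
      rw [Matrix.mulVec, dotProduct, Finset.mul_sum, Complex.re_sum]
    rw [hQ]
    have hstep1 : ∀ j ℓ : Λ, (if j = ℓ then (d j)^2 * ‖z j‖^2 else -(μ * ((d j * ‖z j‖) * (d ℓ * ‖z ℓ‖))))
        ≤ ((starRingEnd ℂ) (z j) * (G j ℓ * z ℓ)).re := by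
      intro j ℓ
      by_cases h : j = ℓ
      · subst h
        rw [if_pos rfl, hGdiag j]
        have : (starRingEnd ℂ) (z j) * (((d j ^ 2 : ℝ) : ℂ) * z j)
            = (((d j)^2 * ‖z j‖^2 : ℝ) : ℂ) := by
          rw [mul_left_comm, RCLike.conj_mul]
          push_cast
          norm_num
        rw [this, Complex.ofReal_re]
      · rw [if_neg h]
        have hb : ‖(starRingEnd ℂ) (z j) * (G j ℓ * z ℓ)‖ ≤ μ * ((d j * ‖z j‖) * (d ℓ * ‖z ℓ‖)) := by
          rw [norm_mul, norm_mul, RCLike.norm_conj]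
          have := hGoff j ℓ h
          have h1 : ‖z j‖ * (‖G j ℓ‖ * ‖z ℓ‖) ≤ ‖z j‖ * ((μ * (d j * d ℓ)) * ‖z ℓ‖) := by
            apply mul_le_mul_of_nonneg_left _ (norm_nonneg _)
            exact mul_le_mul_of_nonneg_right this (norm_nonneg _)
          calc ‖z j‖ * (‖G j ℓ‖ * ‖z ℓ‖) ≤ ‖z j‖ * ((μ * (d j * d ℓ)) * ‖z ℓ‖) := h1
            _ = μ * ((d j * ‖z j‖) * (d ℓ * ‖z ℓ‖)) := by ring
        have := neg_abs_le ((starRingEnd ℂ) (z j) * (G j ℓ * z ℓ)).re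
        have habs : |((starRingEnd ℂ) (z j) * (G j ℓ * z ℓ)).re| ≤ ‖(starRingEnd ℂ) (z j) * (G j ℓ * z ℓ)‖ := Complex.abs_re_le_norm _
        linarith
    have hsum1 : ∑ j : Λ, ∑ ℓ : Λ, (if j = ℓ then (d j)^2 * ‖z j‖^2 else -(μ * ((d j * ‖z j‖) * (d ℓ * ‖z ℓ‖))))
        ≤ ∑ j : Λ, ∑ ℓ : Λ, ((starRingEnd ℂ) (z j) * (G j ℓ * z ℓ)).re :=
      Finset.sum_le_sum fun j _ => Finset.sum_le_sum fun ℓ _ => hstep1 j ℓ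
    refine le_trans ?_ hsum1
    -- compute the lower-bound double sum
    set P := ∑ j : Λ, d j * ‖z j‖ with hP_def
    set S := ∑ j : Λ, (d j * ‖z j‖)^2 with hS_def
    set T := ∑ j : Λ, ‖z j‖^2 with hT_def
    have hcompute : ∑ j : Λ, ∑ ℓ : Λ, (if j = ℓ then (d j)^2 * ‖z j‖^2 else -(μ * ((d j * ‖z j‖) * (d ℓ * ‖z ℓ‖))))
        = (S + μ * S) - μ * P^2 := by
      have hpt : ∀ j ℓ : Λ, (if j = ℓ then (d j)^2 * ‖z j‖^2 else -(μ * ((d j * ‖z j‖) * (d ℓ * ‖z ℓ‖))))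
          = (if j = ℓ then (d j)^2 * ‖z j‖^2 + μ * ((d j * ‖z j‖) * (d ℓ * ‖z ℓ‖)) else 0)
            - μ * ((d j * ‖z j‖) * (d ℓ * ‖z ℓ‖)) := by
        intro j ℓ; split_ifs with h <;> ring
      rw [Finset.sum_congr rfl fun j _ => Finset.sum_congr rfl fun ℓ _ => hpt j ℓ]
      have h1 : ∀ j : Λ, ∑ ℓ : Λ, ((if j = ℓ then (d j)^2 * ‖z j‖^2 + μ * ((d j * ‖z j‖) * (d ℓ * ‖z ℓ‖)) else 0)
            - μ * ((d j * ‖z j‖) * (d ℓ * ‖z ℓ‖)))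
          = ((d j)^2 * ‖z j‖^2 + μ * (d j * ‖z j‖)^2) - μ * ((d j * ‖z j‖) * P) := by
        intro j
        rw [Finset.sum_sub_distrib, Finset.sum_ite_eq (Finset.univ) j (fun ℓ => (d j)^2 * ‖z j‖^2 + μ * ((d j * ‖z j‖) * (d ℓ * ‖z ℓ‖)))]
        simp only [Finset.mem_univ, if_true]
        rw [← Finset.mul_sum, ← Finset.mul_sum, ← hP_def]
        ring
      rw [Finset.sum_congr rfl fun j _ => h1 j]
      rw [Finset.sum_sub_distrib, Finset.sum_add_distrib, ← Finset.mul_sum, ← Finset.mul_sum, ← Finset.sum_mul, ← hP_def]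
      have : ∑ j : Λ, (d j)^2 * ‖z j‖^2 = S := by
        rw [hS_def]; exact Finset.sum_congr rfl fun j _ => by ring
      rw [this, hS_def]
      ring
    rw [hcompute]
    -- Cauchy–Schwarz : P^2 ≤ K * S
    have hPS : P^2 ≤ K * S := by
      have := sq_sum_le_card_mul_sum_sq (s := (Finset.univ : Finset Λ)) (f := fun j => d j * ‖z j‖)
      rw [← hP_def, ← hS_def] at this
      simpa [Finset.card_univ, hKcard] using this
    have hβpos : 0 < 1 - (K - 1) * μ := by
      have h2 : dmin ≤ dmax := (hdmin_le ⟨0, hN⟩).trans (hle_dmax ⟨0, hN⟩)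
      have h3 : (K - 1) * μ * dmax < 1 * dmax := by rw [hc_def] at hpos; linarith
      have h4 := lt_of_mul_lt_mul_right h3 hdmaxpos.le
      linarith
    have hSd : dmin^2 * T ≤ S := by
      rw [hS_def, hT_def, Finset.mul_sum]
      refine Finset.sum_le_sum fun j _ => ?_
      have h2 : dmin^2 ≤ d (j:Fin N)^2 := pow_le_pow_left₀ hdminpos.le (hdmin_le (j:Fin N)) 2
      rw [mul_pow]
      exact mul_le_mul_of_nonneg_right h2 (sq_nonneg _)
    have hSnn : 0 ≤ S := by positivity
    have hTnn : 0 ≤ T := by positivity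
    -- α * T ≤ (1 - (K-1)μ) * S ≤ S + μS - μP²
    have hmain : α * T ≤ (1 - (K - 1) * μ) * S := by
      have h1 : α ≤ (1 - (K - 1) * μ) * dmin^2 := by
        rw [hα_def, hc_def]
        have h2 : dmin ≤ dmax := (hdmin_le ⟨0, hN⟩).trans (hle_dmax ⟨0, hN⟩)
        have h5 : (K-1) * (μ*dmin) * dmin ≤ (K-1) * (μ*dmax) * dmin := by
          apply mul_le_mul_of_nonneg_right _ hdminpos.le
          apply mul_le_mul_of_nonneg_left _ (by linarith : (0:ℝ) ≤ K - 1)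
          exact mul_le_mul_of_nonneg_left h2 hμ0
        nlinarith [h5]
      calc α * T ≤ ((1 - (K - 1) * μ) * dmin^2) * T := mul_le_mul_of_nonneg_right h1 hTnn
        _ = (1 - (K - 1) * μ) * (dmin^2 * T) := by ring
        _ ≤ (1 - (K - 1) * μ) * S := mul_le_mul_of_nonneg_left hSd hβpos.le
    have : (1 - (K - 1) * μ) * S ≤ (S + μ * S) - μ * P^2 := by nlinarith
    linarith
  -- G is invertible
  have hGker : ∀ z : Λ → ℂ, G.mulVec z = 0 → z = 0 := by
    intro z hz
    have h0 : (∑ j, (starRingEnd ℂ) (z j) * G.mulVec z j).re = 0 := by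
      rw [hz]; simp
    have := hquad z
    rw [h0] at this
    have hTz : ∑ j, ‖z j‖^2 ≤ 0 := by
      by_contra h
      push_neg at h
      nlinarith
    have hall := (Finset.sum_eq_zero_iff_of_nonneg (fun j _ => by positivity)).mp
      (le_antisymm hTz (Finset.sum_nonneg fun j _ => by positivity))
    funext j
    have := hall j (Finset.mem_univ j)
    have : ‖z j‖ = 0 := by nlinarith [norm_nonneg (z j)]
    simpa using this
  have hGinj : Function.Injective G.mulVec := by
    intro z1 z2 h
    have : G.mulVec (z1 - z2) = 0 := by
      rw [Matrix.mulVec_sub, h, sub_self]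
    have := hGker _ this
    exact sub_eq_zero.mp this
  have hGdet : IsUnit G.det := (Matrix.isUnit_iff_isUnit_det G).mp (Matrix.mulVec_injective_iff_isUnit.mp hGinj)
  -- derive G *ᵥ u = w
  set w : Λ → ℂ := Bᴴ.mulVec v with hw_def
  set u : Λ → ℂ := fun j => xhat j - x j with hu_def
  have hAx : A.mulVec x = B.mulVec (fun j : Λ => x j) := by
    funext m
    rw [Matrix.mulVec, Matrix.mulVec, dotProduct, dotProduct]
    have hcs : ∑ i : Λ, B m i * x (i : Fin N) = ∑ i ∈ Λ, A m i * x i :=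
      Finset.sum_coe_sort Λ (fun i => A m i * x i)
    rw [hcs]
    refine (Finset.sum_subset (Finset.subset_univ Λ) fun i _ hi => ?_).symm
    rw [hxsupp i hi, mul_zero]
  have hBy : Bᴴ.mulVec y = G.mulVec (fun j : Λ => x j) + w := by
    rw [hy, Matrix.mulVec_add, hAx, Matrix.mulVec_mulVec, hG_def]
  have hxhat2 : (fun j : Λ => xhat j) = (fun j : Λ => x j) + G⁻¹.mulVec w := by
    rw [hxhat, hBy, Matrix.mulVec_add, Matrix.mulVec_mulVec, Matrix.nonsing_inv_mul G hGdet, Matrix.one_mulVec]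
  have hu_eq : u = G⁻¹.mulVec w := by
    funext j
    have := congrFun hxhat2 j
    simp only [Pi.add_apply] at this
    rw [hu_def]
    simp only []
    rw [this]; ring
  have hGu : G.mulVec u = w := by
    rw [hu_eq, Matrix.mulVec_mulVec, Matrix.mul_nonsing_inv G hGdet, Matrix.one_mulVec]
  -- bound on w
  have hwbound : ∀ j : Λ, ‖w j‖ ≤ ρ * dmax := by
    intro j
    have hwj : w j = dotProduct (star fun m => A m (j : Fin N)) v := by
      rw [hw_def, Matrix.mulVec, dotProduct, dotProduct]
      refine Finset.sum_congr rfl fun m _ => ?_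
      simp [hB_def, Matrix.conjTranspose_apply]
    rw [hwj]
    have := hv (j : Fin N)
    rw [div_lt_iff₀ (hdpos _)] at this
    have h2 := hle_dmax (j : Fin N)
    nlinarith [hρpos]
  set T := ∑ j : Λ, ‖u j‖^2 with hT_def
  set W := ∑ j : Λ, ‖w j‖^2 with hW_def
  have hWbound : W ≤ K * (ρ * dmax)^2 := by
    rw [hW_def]
    calc ∑ j : Λ, ‖w j‖^2 ≤ ∑ j : Λ, (ρ * dmax)^2 :=
          Finset.sum_le_sum fun j _ => by
            have := hwbound j
            nlinarith [norm_nonneg (w j)]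
      _ = K * (ρ * dmax)^2 := by
          rw [Finset.sum_const, Finset.card_univ, nsmul_eq_mul, hKcard]
  have h1 : α * T ≤ ∑ j : Λ, ‖u j‖ * ‖w j‖ := by
    have := hquad u
    rw [hGu] at this
    refine le_trans this ?_
    rw [Complex.re_sum]
    refine Finset.sum_le_sum fun j _ => ?_
    calc ((starRingEnd ℂ) (u j) * w j).re ≤ |((starRingEnd ℂ) (u j) * w j).re| := le_abs_self _
      _ ≤ ‖(starRingEnd ℂ) (u j) * w j‖ := Complex.abs_re_le_norm _
      _ = ‖u j‖ * ‖w j‖ := by rw [norm_mul, RCLike.norm_conj]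
  have h2 : (∑ j : Λ, ‖u j‖ * ‖w j‖)^2 ≤ T * W := by
    have := Finset.sum_mul_sq_le_sq_mul_sq (Finset.univ : Finset Λ) (fun j => ‖u j‖) (fun j => ‖w j‖)
    rw [hT_def, hW_def]
    exact this
  have hTnn : 0 ≤ T := Finset.sum_nonneg fun j _ => by positivity
  have hWnn : 0 ≤ W := Finset.sum_nonneg fun j _ => by positivity
  have hTbound : T ≤ W / α^2 := by
    rcases eq_or_lt_of_le hTnn with hT0 | hT0
    · rw [← hT0]; positivity
    · have hP0 : 0 ≤ ∑ j : Λ, ‖u j‖ * ‖w j‖ :=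
        Finset.sum_nonneg fun j _ => mul_nonneg (norm_nonneg _) (norm_nonneg _)
      have h3 : (α * T)^2 ≤ T * W := by
        calc (α * T)^2 ≤ (∑ j : Λ, ‖u j‖ * ‖w j‖)^2 := by
              apply sq_le_sq' <;> nlinarith [mul_pos hαpos hT0]
          _ ≤ T * W := h2
      rw [le_div_iff₀ (by positivity)]
      nlinarith
  have hLHS : ∑ j, ‖xhat j - x j‖ ^ 2 = T := by
    rw [hT_def, Finset.sum_coe_sort Λ (fun j => ‖xhat j - x j‖^2)]
    refine (Finset.sum_subset (Finset.subset_univ Λ) fun i _ hi => ?_).symm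
    rw [hxhatsupp i hi, hxsupp i hi]
    simp
  rw [hLHS]
  have hfinal : W / α^2 ≤ (dmax / dmin) ^ 2 * (K * ρ ^ 2) / (dmin - c) ^ 2 := by
    have heq : (dmax / dmin) ^ 2 * (K * ρ ^ 2) / (dmin - c) ^ 2 = K * (ρ * dmax)^2 / α^2 := by
      rw [hα_def]
      field_simp
    rw [heq]
    apply div_le_div_of_nonneg_right hWbound (by positivity) |>.trans_eq rfl
  exact hTbound.trans hfinal
end
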